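/- Let j ≥ 1 be an integer and let ξ, η ∈ ℝ³ be such that either (η lies in the support of χ_j^− and ξ − η lies in the support of χ_j^+) or (η lies in the support of χ_j^+ and ξ − η lies in the support of χ_j^−). Then −1 ≤ (ξ₂ − η₂)η₂ / (|ξ − η| |η|) ≤ −1/16. -/

import Mathlib

open MeasureTheory ENNReal Real Filter
open scoped RealInnerProductSpace

noncomputable section

/-- Physical/frequency space ℝ³ with the Euclidean norm. -/
abbrev R3 := EuclideanSpace ℝ (Fin 3)

/-- Vector values ℂ⁶ = ℂ³ × ℂ³ (velocity and micro-rotation components). -/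
abbrev C6 := (Fin 3 ⊕ Fin 3) → ℂ

/-- η lies in the support of χ_j^+, the cube {|ξ₁| ≤ 1, |ξ₂ − 2^j| ≤ 1, |ξ₃| ≤ 1}. -/
def InSuppP (j : ℤ) (η : R3) : Prop :=
  |η 0| ≤ 1 ∧ |η 1 - 2 ^ j| ≤ 1 ∧ |η 2| ≤ 1

/-- η lies in the support of χ_j^−, the cube {|ξ₁| ≤ 1, |ξ₂ + 2^j| ≤ 1, |ξ₃| ≤ 1}. -/
def InSuppM (j : ℤ) (η : R3) : Prop :=
  |η 0| ≤ 1 ∧ |η 1 + 2 ^ j| ≤ 1 ∧ |η 2| ≤ 1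

/-! The second coordinates of `ξ - η` and `η` have modulus in `[2^j - 1, 2^j + 1]` and opposite
signs, while the other coordinates have modulus at most `1`. As `2^j - 1 ≥ 1`, each norm is at most
`√3` times the modulus of its second coordinate, so the ratio even lies in `[-1, -1/3]`. -/

section EuclideanCoordinates

variable {ι : Type*} [Fintype ι]

lemma neg_one_le_apply_mul_apply_div_norm_mul_norm (x y : EuclideanSpace ℝ ι) (i k : ι) :
    -1 ≤ x i * y k / (‖x‖ * ‖y‖) := by
  have hbound : |x i * y k| ≤ ‖x‖ * ‖y‖ := by
    rw [abs_mul]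
    exact mul_le_mul (PiLp.norm_apply_le x i) (PiLp.norm_apply_le y k) (abs_nonneg _)
      (norm_nonneg x)
  have hratio : |x i * y k / (‖x‖ * ‖y‖)| ≤ 1 := by
    rw [abs_div, abs_of_nonneg (mul_nonneg (norm_nonneg x) (norm_nonneg y))]
    exact div_le_one_of_le₀ hbound (by positivity)
  exact (abs_le.mp hratio).1

lemma apply_mul_apply_div_norm_mul_norm_le_neg_inv {c : ℝ} (x y : EuclideanSpace ℝ ι) (i k : ι)
    (hneg : x i * y k < 0) (hx : ‖x‖ ^ 2 ≤ c * x i ^ 2) (hy : ‖y‖ ^ 2 ≤ c * y k ^ 2) :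
    x i * y k / (‖x‖ * ‖y‖) ≤ -c⁻¹ := by
  have hxi : 0 < |x i| := abs_pos.mpr (left_ne_zero_of_mul hneg.ne)
  have hyk : 0 < |y k| := abs_pos.mpr (right_ne_zero_of_mul hneg.ne)
  have hnorm : 0 < ‖x‖ * ‖y‖ :=
    mul_pos (hxi.trans_le (PiLp.norm_apply_le x i)) (hyk.trans_le (PiLp.norm_apply_le y k))
  have hc : 0 < c :=
    pos_of_mul_pos_left ((pow_pos (hxi.trans_le (PiLp.norm_apply_le x i)) 2).trans_le hx)
      (sq_nonneg _)
  have hsq : (‖x‖ * ‖y‖) ^ 2 ≤ (c * -(x i * y k)) ^ 2 := by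
    calc (‖x‖ * ‖y‖) ^ 2 = ‖x‖ ^ 2 * ‖y‖ ^ 2 := by ring
      _ ≤ (c * x i ^ 2) * (c * y k ^ 2) := mul_le_mul hx hy (by positivity) (by positivity)
      _ = (c * -(x i * y k)) ^ 2 := by ring
  have hprod : ‖x‖ * ‖y‖ ≤ c * -(x i * y k) :=
    (pow_le_pow_iff_left₀ hnorm.le (mul_nonneg hc.le (neg_nonneg.mpr hneg.le)) two_ne_zero).mp hsq
  rw [div_le_iff₀ hnorm]
  calc x i * y k = -c⁻¹ * (c * -(x i * y k)) := by field_simp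
    _ ≤ -c⁻¹ * (‖x‖ * ‖y‖) :=
      mul_le_mul_of_nonpos_left hprod (neg_nonpos.mpr (inv_nonneg.mpr hc.le))

end EuclideanCoordinates

lemma norm_sq_le_three_mul_sq_of_abs_le_one {x : R3} (h0 : |x 0| ≤ 1) (h1 : 1 ≤ |x 1|)
    (h2 : |x 2| ≤ 1) : ‖x‖ ^ 2 ≤ 3 * x 1 ^ 2 := by
  rw [EuclideanSpace.real_norm_sq_eq, Fin.sum_univ_three]
  linarith [(sq_le_one_iff_abs_le_one (x 0)).mpr h0, (one_le_sq_iff_one_le_abs (x 1)).mpr h1,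
    (sq_le_one_iff_abs_le_one (x 2)).mpr h2]

lemma two_le_two_zpow {j : ℤ} (hj : 1 ≤ j) : (2 : ℝ) ≤ 2 ^ j := by
  simpa using zpow_le_zpow_right₀ one_le_two hj

namespace InSuppP

variable {j : ℤ} {x : R3}

lemma one_le_apply_one (hj : 1 ≤ j) (hx : InSuppP j x) : 1 ≤ x 1 := by
  linarith [(abs_le.mp hx.2.1).1, two_le_two_zpow hj]

lemma norm_sq_le (hj : 1 ≤ j) (hx : InSuppP j x) : ‖x‖ ^ 2 ≤ 3 * x 1 ^ 2 :=
  norm_sq_le_three_mul_sq_of_abs_le_one hx.1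
    ((hx.one_le_apply_one hj).trans (le_abs_self _)) hx.2.2

end InSuppP

namespace InSuppM

variable {j : ℤ} {x : R3}

lemma apply_one_le_neg_one (hj : 1 ≤ j) (hx : InSuppM j x) : x 1 ≤ -1 := by
  linarith [(abs_le.mp hx.2.1).2, two_le_two_zpow hj]

lemma norm_sq_le (hj : 1 ≤ j) (hx : InSuppM j x) : ‖x‖ ^ 2 ≤ 3 * x 1 ^ 2 :=
  norm_sq_le_three_mul_sq_of_abs_le_one hx.1
    (le_abs.mpr (Or.inr (le_neg_of_le_neg (hx.apply_one_le_neg_one hj)))) hx.2.2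

end InSuppM

/-- For an integer j ≥ 1, if η ∈ supp χ_j^− and ξ − η ∈ supp χ_j^+ (or with the
roles of + and − exchanged), then −1 ≤ (ξ₂ − η₂)η₂/(|ξ − η||η|) ≤ −1/16. -/
theorem interaction_sign_bound (j : ℤ) (hj : 1 ≤ j) (ξ η : R3)
    (h : (InSuppM j η ∧ InSuppP j (ξ - η)) ∨ (InSuppP j η ∧ InSuppM j (ξ - η))) :
    -1 ≤ (ξ 1 - η 1) * η 1 / (‖ξ - η‖ * ‖η‖) ∧
      (ξ 1 - η 1) * η 1 / (‖ξ - η‖ * ‖η‖) ≤ -(1 / 16) := by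
  obtain ⟨hneg, hdiff, hη⟩ : (ξ - η) 1 * η 1 < 0 ∧ ‖ξ - η‖ ^ 2 ≤ 3 * (ξ - η) 1 ^ 2 ∧
      ‖η‖ ^ 2 ≤ 3 * η 1 ^ 2 := by
    rcases h with ⟨hηM, hdiffP⟩ | ⟨hηP, hdiffM⟩
    · exact ⟨mul_neg_of_pos_of_neg (by linarith [hdiffP.one_le_apply_one hj])
        (by linarith [hηM.apply_one_le_neg_one hj]), hdiffP.norm_sq_le hj, hηM.norm_sq_le hj⟩
    · exact ⟨mul_neg_of_neg_of_pos (by linarith [hdiffM.apply_one_le_neg_one hj])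
        (by linarith [hηP.one_le_apply_one hj]), hdiffM.norm_sq_le hj, hηP.norm_sq_le hj⟩
  refine ⟨neg_one_le_apply_mul_apply_div_norm_mul_norm (ξ - η) η 1 1, ?_⟩
  calc (ξ 1 - η 1) * η 1 / (‖ξ - η‖ * ‖η‖) ≤ -3⁻¹ :=
        apply_mul_apply_div_norm_mul_norm_le_neg_inv (ξ - η) η 1 1 hneg hdiff hη
    _ ≤ -(1 / 16) := by norm_num
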